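/- For every n ≥ 2, let H_n be the spanning subgraph of the n×n grid graph G_n consisting of all horizontal edges {(i,j),(i,j+1)}. Then the incidence graph of the CNF ψ(H_n) has pathwidth at most 7. -/

import Mathlib

/-! ## Common definitions -/

/-- A (partial) assignment over variable type `V`. -/
abbrev Asg (V : Type*) := V → Option Bool

/-- The domain (set of variables) of an assignment. -/
def Asg.dom {V : Type*} (g : Asg V) : Set V := {x | g x ≠ none}

/-- Union of two assignments (the left one takes precedence where both are defined). -/
def Asg.union {V : Type*} (g h : Asg V) : Asg V := fun x => (g x).orElse (fun _ => h x)

/-- A set of assignments is uniform with common domain `S`. -/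
def UniformOn {V : Type*} (H : Set (Asg V)) (S : Set V) : Prop := ∀ g ∈ H, g.dom = S

/-- The product `H₁ × H₂` of two sets of assignments. -/
def AsgProd {V : Type*} (H₁ H₂ : Set (Asg V)) : Set (Asg V) := Set.image2 Asg.union H₁ H₂

/-- `H`, a uniform set of assignments with variable set `W`, is a rectangle that
breaks `Y ⊆ W`: it has nonempty uniform witnesses whose nonempty variable sets
partition `W` and both meet `Y`. -/
def BreaksOn {V : Type*} (H : Set (Asg V)) (W Y : Set V) : Prop :=
  ∃ (H₁ H₂ : Set (Asg V)) (S₁ S₂ : Set V),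
    H₁.Nonempty ∧ H₂.Nonempty ∧ UniformOn H₁ S₁ ∧ UniformOn H₂ S₂ ∧
    S₁.Nonempty ∧ S₂.Nonempty ∧ S₁ ∩ S₂ = ∅ ∧ S₁ ∪ S₂ = W ∧
    H = AsgProd H₁ H₂ ∧ (Y ∩ S₁).Nonempty ∧ (Y ∩ S₂).Nonempty

/-- Combination of finitely many assignments (with pairwise disjoint domains). -/
def Asg.combine {V : Type*} {m : ℕ} (c : Fin m → Asg V) : Asg V :=
  fun x => (List.finRange m).foldr (fun i acc => (c i x).orElse (fun _ => acc)) none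

/-- The product `H 0 × ⋯ × H (m-1)` of finitely many sets of assignments. -/
def bigProd {V : Type*} {m : ℕ} (H : Fin m → Set (Asg V)) : Set (Asg V) :=
  {g | ∃ c : Fin m → Asg V, (∀ i, c i ∈ H i) ∧ g = Asg.combine c}

/-- `M` is a matching of `G` (a set of pairwise disjoint edges of `G`). -/
def IsMatchingSet {V : Type*} (G : SimpleGraph V) (M : Set (Sym2 V)) : Prop :=
  M ⊆ G.edgeSet ∧ ∀ e ∈ M, ∀ f ∈ M, e ≠ f → ∀ x, x ∈ e → x ∉ f

/-- The set `V(M)` of endpoints of a set of edges. -/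
def endpoints {V : Type*} (M : Set (Sym2 V)) : Set V := {v | ∃ e ∈ M, v ∈ e}

/-- `M` is an induced matching of `G`: a matching such that the subgraph of `G`
induced by `V(M)` has edge set exactly `M`. -/
def IsInducedMatchingSet {V : Type*} (G : SimpleGraph V) (M : Set (Sym2 V)) : Prop :=
  IsMatchingSet G M ∧ ∀ e ∈ G.edgeSet, (∀ v ∈ e, v ∈ endpoints M) → e ∈ M

/-- `P` is a prefix of the linear order `π`. -/
def IsPrefix {V : Type*} (π : LinearOrder V) (P : Set V) : Prop :=
  ∀ x ∈ P, ∀ y, π.le y x → y ∈ P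

/-- `M` crosses the linear order `π`: some prefix of `π` contains exactly one
endpoint of every edge of `M`. -/
def Crosses {V : Type*} (π : LinearOrder V) (M : Set (Sym2 V)) : Prop :=
  ∃ P : Set V, IsPrefix π P ∧ ∀ e ∈ M, ∃ x y, e = s(x, y) ∧ x ∈ P ∧ y ∉ P

/-- Linear special induced matching width: the minimum over linear orders of the
maximum size of an induced matching crossing the order. -/
noncomputable def lsimw {V : Type*} (G : SimpleGraph V) : ℕ :=
  sInf {k | ∃ π : LinearOrder V, ∀ M : Set (Sym2 V),
    IsInducedMatchingSet G M → Crosses π M → M.ncard ≤ k}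

/-- Linear maximum matching width: as `lsimw` but with arbitrary matchings. -/
noncomputable def lmmw {V : Type*} (G : SimpleGraph V) : ℕ :=
  sInf {k | ∃ π : LinearOrder V, ∀ M : Set (Sym2 V),
    IsMatchingSet G M → Crosses π M → M.ncard ≤ k}

/-- The bipartite double cover `G*`; vertex `v[1]` is `(v, false)` and `v[2]` is `(v, true)`. -/
def doubleCover {V : Type*} (G : SimpleGraph V) : SimpleGraph (V × Bool) where
  Adj a b := G.Adj a.1 b.1 ∧ a.2 ≠ b.2
  symm := ⟨fun a b h => ⟨h.1.symm, h.2.symm⟩⟩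
  loopless := ⟨fun a h => h.2 rfl⟩

/-- `M`, a matching of the double cover, neatly crosses a linear order `π` of
`V × Bool`: every edge of `M` goes from `U[1]` to `W[2]` for some `U, W ⊆ V`, and
some prefix of `π` contains all endpoints of `M` on one of the two sides and none
of the endpoints on the other side. -/
def NeatlyCrosses {V : Type*} (π : LinearOrder (V × Bool)) (M : Set (Sym2 (V × Bool))) : Prop :=
  ∃ U W : Set V,
    (∀ e ∈ M, ∃ u ∈ U, ∃ w ∈ W, e = s((u, false), (w, true))) ∧
    ∃ P : Set (V × Bool), IsPrefix π P ∧
      ((∀ v ∈ endpoints M, (v.2 = false → v ∈ P) ∧ (v.2 = true → v ∉ P)) ∨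
       (∀ v ∈ endpoints M, (v.2 = true → v ∈ P) ∧ (v.2 = false → v ∉ P)))

/-- The `n × n` grid graph. -/
def gridGraph (n : ℕ) : SimpleGraph (Fin n × Fin n) :=
  SimpleGraph.fromRel (fun p q =>
    (p.1 = q.1 ∧ (p.2 : ℕ) + 1 = (q.2 : ℕ)) ∨ (p.2 = q.2 ∧ (p.1 : ℕ) + 1 = (q.1 : ℕ)))

/-- The spanning subgraph of the `n × n` grid consisting of the horizontal edges. -/
def gridHoriz (n : ℕ) : SimpleGraph (Fin n × Fin n) :=
  SimpleGraph.fromRel (fun p q => p.1 = q.1 ∧ (p.2 : ℕ) + 1 = (q.2 : ℕ))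

/-- A clause: a set of literals, a literal being a variable with a polarity
(`true` = positive). -/
abbrev Clause (W : Type*) := Set (W × Bool)

/-- A CNF: a set of clauses. -/
abbrev CNF (W : Type*) := Set (Clause W)

/-- A total assignment satisfies a CNF. -/
def Satisfies {W : Type*} (a : W → Bool) (φ : CNF W) : Prop :=
  ∀ C ∈ φ, ∃ l ∈ C, a l.1 = l.2

/-- The set of variables occurring in a CNF. -/
def cnfVars {W : Type*} (φ : CNF W) : Set W := {x | ∃ C ∈ φ, ∃ b, (x, b) ∈ C}

/-- The CNF `φ(G)`: a positive clause `(u ∨ v)` for every edge of `G`. -/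
def phiCNF {V : Type*} (G : SimpleGraph V) : CNF V :=
  {C | ∃ e ∈ G.edgeSet, C = {l | ∃ x ∈ e, l = (x, true)}}

/-- The CNF `ψ(G)`: the positive edge clauses of the double cover `G*` together with
the two all-negative clauses `⋁ᵥ ¬v[1]` and `⋁ᵥ ¬v[2]`. -/
def psiCNF {V : Type*} (G : SimpleGraph V) : CNF (V × Bool) :=
  {C | ∃ e ∈ (doubleCover G).edgeSet, C = {l | ∃ x ∈ e, l = (x, true)}} ∪
    {{l | ∃ v : V, l = ((v, false), false)}, {l | ∃ v : V, l = ((v, true), false)}}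

/-- Make a total assignment out of a partial one (defaulting to `false` off the domain). -/
def Asg.totalize {W : Type*} (g : Asg W) : W → Bool := fun x => (g x).getD false

/-- `S(φ)|_g`: assignments `h` with domain `var(φ) \ var(g)` such that `g ∪ h` satisfies `φ`. -/
def solsRestrict {W : Type*} (φ : CNF W) (g : Asg W) : Set (Asg W) :=
  {h | h.dom = cnfVars φ \ g.dom ∧ Satisfies (Asg.totalize (Asg.union g h)) φ}

/-- A partial assignment satisfies a clause. -/
def satClausePartial {W : Type*} (g : Asg W) (C : Clause W) : Prop :=
  ∃ l ∈ C, g l.1 = some l.2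

/-- The CNF `φ[g]`: delete clauses satisfied by `g` and remove from the remaining
clauses all literals whose variable is assigned by `g`. -/
def cnfRestrictFormula {W : Type*} (φ : CNF W) (g : Asg W) : CNF W :=
  {C' | ∃ C ∈ φ, ¬ satClausePartial g C ∧ C' = {l ∈ C | l.1 ∉ g.dom}}

/-- The total satisfying assignments of a CNF, over its variable set. -/
def totalSols {W : Type*} (φ : CNF W) : Set (Asg W) :=
  {h | h.dom = cnfVars φ ∧ Satisfies (Asg.totalize h) φ}

/-- All assignments with domain `Y`. -/
def allAsgOn {W : Type*} (Y : Set W) : Set (Asg W) := {h | h.dom = Y}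

/-- Binary decision trees over variables `X`. -/
inductive DTree (X : Type*) where
  | leaf : Bool → DTree X
  | node : X → DTree X → DTree X → DTree X

namespace DTree

/-- The size (number of nodes) of a decision tree. -/
def size {X : Type*} : DTree X → ℕ
  | leaf _ => 1
  | node _ t0 t1 => 1 + t0.size + t1.size

/-- The variables occurring in a decision tree. -/
def varsOf {X : Type*} : DTree X → Set X
  | leaf _ => ∅
  | node x t0 t1 => {x} ∪ t0.varsOf ∪ t1.varsOf

/-- The read-once condition: no variable occurs twice on a root-leaf path. -/
def ReadOnce {X : Type*} : DTree X → Prop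
  | leaf _ => True
  | node x t0 t1 => x ∉ t0.varsOf ∧ x ∉ t1.varsOf ∧ t0.ReadOnce ∧ t1.ReadOnce

/-- Evaluation of a decision tree on a total assignment. -/
def eval {X : Type*} : DTree X → (X → Bool) → Bool
  | leaf b, _ => b
  | node x t0 t1, a => if a x then t1.eval a else t0.eval a

end DTree

/-- `(τ, B)` is a tree decomposition of `H`. -/
def IsTreeDecomp {V : Type u} {T : Type v} (H : SimpleGraph V) (τ : SimpleGraph T)
    (B : T → Set V) : Prop :=
  τ.IsTree ∧ (∀ e ∈ H.edgeSet, ∃ t, ∀ v ∈ e, v ∈ B t) ∧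
    (∀ v : V, (τ.induce {t | v ∈ B t}).Connected)

/-- The treewidth of a graph: minimum width over all tree decompositions. -/
noncomputable def treewidth {V : Type u} (H : SimpleGraph V) : ℕ :=
  sInf {k | ∃ (T : Type) (τ : SimpleGraph T) (B : T → Set V),
    IsTreeDecomp H τ B ∧ ∀ t, (B t).ncard ≤ k + 1}

/-- `B : Fin m → Set V` is a path decomposition of `H`. -/
def IsPathDecomp {V : Type u} (H : SimpleGraph V) (m : ℕ) (B : Fin m → Set V) : Prop :=
  (∀ e ∈ H.edgeSet, ∃ i, ∀ v ∈ e, v ∈ B i) ∧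
    (∀ v : V, (∃ i, v ∈ B i) ∧
      ∀ i j k : Fin m, i ≤ j → j ≤ k → v ∈ B i → v ∈ B k → v ∈ B j)

/-- The pathwidth of a graph: minimum width over all path decompositions. -/
noncomputable def pathwidth {V : Type u} (H : SimpleGraph V) : ℕ :=
  sInf {k | ∃ (m : ℕ) (B : Fin m → Set V), IsPathDecomp H m B ∧ ∀ i, (B i).ncard ≤ k + 1}

/-- The incidence graph of a CNF: variables on one side, clauses on the other,
a variable adjacent to exactly the clauses in which it occurs. -/
def incidenceGraph {W : Type u} (φ : CNF W) : SimpleGraph (W ⊕ {C : Clause W // C ∈ φ}) :=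
  SimpleGraph.fromRel (fun a b => ∃ (x : W) (C : {C : Clause W // C ∈ φ}),
    a = Sum.inl x ∧ b = Sum.inr C ∧ ∃ bb : Bool, (x, bb) ∈ C.1)

/-! Order the edges of `H_n` row by row, from left to right, and give each edge `uv` the bag
made of the four variables `u[1], u[2], v[1], v[2]`, the two clauses of `ψ` coming from the
edges of `H_n*` over `uv`, and the two all-negative clauses: eight vertices. The edges at a
vertex of `H_n` are consecutive in this order and every edge clause sits in one bag, so each
vertex of the incidence graph occupies a contiguous run of bags. The argument works for any
graph without isolated vertices whose edges can be ordered so that the edges at each vertex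
are consecutive. -/

theorem Set.ncard_le_four {α : Type*} (a b c d : α) : ({a, b, c, d} : Set α).ncard ≤ 4 := by
  classical
  have h := Finset.card_le_four (a := a) (b := b) (c := c) (d := d)
  rwa [← Set.ncard_coe_finset, Finset.coe_insert, Finset.coe_insert, Finset.coe_insert,
    Finset.coe_singleton] at h

theorem pathwidth_le_of_linearOrder {V ι : Type*} [Fintype ι] [LinearOrder ι]
    {H : SimpleGraph V} {k : ℕ} (B : ι → Set V)
    (hedge : ∀ e ∈ H.edgeSet, ∃ i, ∀ v ∈ e, v ∈ B i) (hmem : ∀ v, ∃ i, v ∈ B i)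
    (hconvex : ∀ v, {i | v ∈ B i}.OrdConnected)
    (hcard : ∀ i, (B i).ncard ≤ k + 1) : pathwidth H ≤ k := by
  let f := Fintype.orderIsoFinOfCardEq ι rfl
  refine Nat.sInf_le ⟨_, B ∘ f, ⟨fun e he => ?_, fun v => ⟨?_, ?_⟩⟩, fun i => hcard _⟩
  · obtain ⟨i, hi⟩ := hedge e he
    exact ⟨f.symm i, by simpa using hi⟩
  · obtain ⟨i, hi⟩ := hmem v
    exact ⟨f.symm i, by simpa using hi⟩
  · intro i j l hij hjl hi hl
    exact (hconvex v).out hi hl ⟨f.monotone hij, f.monotone hjl⟩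

theorem exists_eq_of_mem_edgeSet_incidenceGraph {W : Type*} {φ : CNF W}
    {e : Sym2 (W ⊕ {C : Clause W // C ∈ φ})} (he : e ∈ (incidenceGraph φ).edgeSet) :
    ∃ (x : W) (C : {C : Clause W // C ∈ φ}), (∃ b, (x, b) ∈ C.1) ∧
      e = s(Sum.inl x, Sum.inr C) := by
  induction e using Sym2.ind with
  | _ u v =>
      simp only [SimpleGraph.mem_edgeSet, incidenceGraph, SimpleGraph.fromRel_adj] at he
      rcases he.2 with ⟨x, C, rfl, rfl, hxC⟩ | ⟨x, C, rfl, rfl, hxC⟩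
      · exact ⟨x, C, hxC, rfl⟩
      · exact ⟨x, C, hxC, Sym2.eq_swap⟩

section PsiCNF

variable {V : Type*} {G : SimpleGraph V}

def negClause (V : Type*) (β : Bool) : Clause (V × Bool) := {l | ∃ v : V, l = ((v, β), false)}

theorem mem_psiCNF_cases {C : Clause (V × Bool)} (hC : C ∈ psiCNF G) :
    (∃ a b, (doubleCover G).Adj a b ∧ C = {(a, true), (b, true)}) ∨
      ∃ β, C = negClause V β := by
  rcases hC with ⟨e, he, rfl⟩ | hC
  · left
    induction e using Sym2.ind with
    | _ a b =>
      refine ⟨a, b, he, ?_⟩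
      ext l
      simp [Sym2.mem_iff, or_and_right, exists_or, eq_comm]
  · right
    rcases hC with rfl | rfl
    exacts [⟨false, rfl⟩, ⟨true, rfl⟩]

def psiBag (G : SimpleGraph V) (z : Sym2 V) : Set (V × Bool ⊕ {C // C ∈ psiCNF G}) :=
  Sum.inl '' {x | x.1 ∈ z} ∪
    Sum.inr '' {C | (∃ β, C.1 = negClause V β) ∨ ∀ l ∈ C.1, l.1.1 ∈ z}

@[simp]
theorem inl_mem_psiBag {z : Sym2 V} {x : V × Bool} : Sum.inl x ∈ psiBag G z ↔ x.1 ∈ z := by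
  simp [psiBag]

@[simp]
theorem inr_mem_psiBag {z : Sym2 V} {C : {C // C ∈ psiCNF G}} :
    Sum.inr C ∈ psiBag G z ↔ (∃ β, C.1 = negClause V β) ∨ ∀ l ∈ C.1, l.1.1 ∈ z := by
  simp [psiBag]

theorem inr_mem_psiBag_iff_of_adj {z : Sym2 V} {C : {C // C ∈ psiCNF G}} {a b : V × Bool}
    (hab : (doubleCover G).Adj a b) (hC : C.1 = {(a, true), (b, true)}) :
    Sum.inr C ∈ psiBag G z ↔ z = s(a.1, b.1) := by
  have hneg (β : Bool) : ({(a, true), (b, true)} : Clause (V × Bool)) ≠ negClause V β := by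
    intro h
    have : (a, true) ∈ negClause V β := h ▸ Set.mem_insert _ _
    simp [negClause] at this
  rw [← Sym2.mem_and_mem_iff (G.ne_of_adj hab.1)]
  simp [hC, hneg]

theorem ncard_psiBag_le (z : Sym2 V) : (psiBag G z).ncard ≤ 8 := by
  induction z using Sym2.ind with
  | _ u v =>
    have hvars :
        {x : V × Bool | x.1 ∈ s(u, v)} ⊆ {(u, false), (u, true), (v, false), (v, true)} := by
      rintro ⟨w, β⟩ hw
      simp only [Set.mem_ofPred_eq, Sym2.mem_iff] at hw
      rcases hw with rfl | rfl <;> cases β <;> simp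
    have hclauses : Subtype.val '' {C : {C // C ∈ psiCNF G} |
        (∃ β, C.1 = negClause V β) ∨ ∀ l ∈ C.1, l.1.1 ∈ s(u, v)} ⊆
        {negClause V false, negClause V true, {((u, false), true), ((v, true), true)},
          {((u, true), true), ((v, false), true)}} := by
      rintro _ ⟨C, hC, rfl⟩
      rcases mem_psiCNF_cases C.2 with ⟨⟨a, α⟩, ⟨b, α'⟩, hab, hCab⟩ | ⟨β, hβ⟩
      · have hz' := (inr_mem_psiBag_iff_of_adj hab hCab).1 (inr_mem_psiBag.2 hC)
        have hα : α ≠ α' := hab.2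
        rw [hCab]
        rcases Sym2.eq_iff.1 hz' with ⟨rfl, rfl⟩ | ⟨rfl, rfl⟩ <;> cases α <;> cases α' <;>
          simp_all [Set.pair_comm]
      · cases β <;> simp [hβ]
    calc (psiBag G s(u, v)).ncard ≤ _ + _ := Set.ncard_union_le _ _
      _ = _ + _ := by
        rw [Set.ncard_image_of_injective _ Sum.inl_injective,
          Set.ncard_image_of_injective _ Sum.inr_injective,
          ← Set.ncard_image_of_injective _ Subtype.val_injective]
      _ ≤ 4 + 4 := add_le_add ((Set.ncard_le_ncard hvars).trans (Set.ncard_le_four ..))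
          ((Set.ncard_le_ncard hclauses).trans (Set.ncard_le_four ..))

theorem pathwidth_incidenceGraph_psiCNF_le {ι : Type*} [Fintype ι] [LinearOrder ι] [Nonempty ι]
    (e : ι ≃ G.edgeSet) (hG : ∀ v, ∃ w, G.Adj v w)
    (hconsec : ∀ v, {i | v ∈ (e i : Sym2 V)}.OrdConnected) :
    pathwidth (incidenceGraph (psiCNF G)) ≤ 7 := by
  have hvar (x : V × Bool) : ∃ i, x.1 ∈ (e i : Sym2 V) := by
    obtain ⟨w, hw⟩ := hG x.1
    exact ⟨e.symm ⟨s(x.1, w), hw⟩, by simp⟩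
  refine pathwidth_le_of_linearOrder (fun i => psiBag G (e i)) ?_ ?_ ?_
    (fun i => ncard_psiBag_le _)
  · intro z hz
    obtain ⟨x, C, ⟨β, hxC⟩, rfl⟩ := exists_eq_of_mem_edgeSet_incidenceGraph hz
    suffices ∃ i, x.1 ∈ (e i : Sym2 V) ∧ Sum.inr C ∈ psiBag G (e i) by
      obtain ⟨i, hx, hC⟩ := this
      exact ⟨i, by simp [hx, hC]⟩
    rcases mem_psiCNF_cases C.2 with ⟨a, b, hab, hC⟩ | ⟨γ, hγ⟩
    · refine ⟨e.symm ⟨s(a.1, b.1), hab.1⟩, ?_, by simp [inr_mem_psiBag_iff_of_adj hab hC]⟩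
      rw [hC] at hxC
      rcases hxC with h | h <;> simp_all
    · obtain ⟨i, hi⟩ := hvar x
      exact ⟨i, hi, by simp [hγ]⟩
  · rintro (x | C)
    · simpa using hvar x
    · rcases mem_psiCNF_cases C.2 with ⟨a, b, hab, hC⟩ | ⟨γ, hγ⟩
      · exact ⟨e.symm ⟨s(a.1, b.1), hab.1⟩, by simp [inr_mem_psiBag_iff_of_adj hab hC]⟩
      · exact ⟨Classical.arbitrary ι, by simp [hγ]⟩
  · rintro (x | C)
    · simpa using hconsec x.1
    · rcases mem_psiCNF_cases C.2 with ⟨a, b, hab, hC⟩ | ⟨γ, hγ⟩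
      · refine ⟨fun i hi k hk => ?_⟩
        simp only [Set.mem_ofPred_eq, inr_mem_psiBag_iff_of_adj hab hC] at hi hk
        obtain rfl : i = k := e.injective (Subtype.ext (hi.trans hk.symm))
        simpa [inr_mem_psiBag_iff_of_adj hab hC] using hi
      · simpa [hγ] using Set.ordConnected_univ

end PsiCNF

section GridHoriz

variable {k : ℕ}

def gridHorizEdge (k : ℕ) (t : Fin (k + 1) ×ₗ Fin k) : Sym2 (Fin (k + 1) × Fin (k + 1)) :=
  s(((ofLex t).1, (ofLex t).2.castSucc), ((ofLex t).1, (ofLex t).2.succ))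

theorem mem_gridHorizEdge {t : Fin (k + 1) ×ₗ Fin k} {v : Fin (k + 1) × Fin (k + 1)} :
    v ∈ gridHorizEdge k t ↔
      v.1 = (ofLex t).1 ∧ ((v.2 : ℕ) = (ofLex t).2 ∨ (v.2 : ℕ) = (ofLex t).2 + 1) := by
  simp [gridHorizEdge, Prod.ext_iff, Fin.ext_iff, and_or_left]

theorem gridHorizEdge_mem_edgeSet (t : Fin (k + 1) ×ₗ Fin k) :
    gridHorizEdge k t ∈ (gridHoriz (k + 1)).edgeSet := by
  simp [gridHorizEdge, gridHoriz, Prod.ext_iff, Fin.ext_iff]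

theorem gridHorizEdge_injective : Function.Injective (gridHorizEdge k) := by
  intro t t' h
  apply ofLex.injective
  rcases Sym2.eq_iff.1 h with h | h <;>
    simp only [Prod.ext_iff, Fin.ext_iff, Fin.val_castSucc, Fin.val_succ] at h <;>
    ext <;> omega

theorem exists_gridHorizEdge_eq {z : Sym2 (Fin (k + 1) × Fin (k + 1))}
    (hz : z ∈ (gridHoriz (k + 1)).edgeSet) : ∃ t, gridHorizEdge k t = z := by
  induction z using Sym2.ind with
  | _ p q =>
    have key {a b : Fin (k + 1) × Fin (k + 1)} (hrow : a.1 = b.1) (hcol : (a.2 : ℕ) + 1 = b.2) :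
        gridHorizEdge k (toLex (a.1, ⟨a.2, by omega⟩)) = s(a, b) := by
      simp [gridHorizEdge, Prod.ext_iff, Fin.ext_iff, hrow, hcol]
    simp only [gridHoriz, SimpleGraph.mem_edgeSet, SimpleGraph.fromRel_adj] at hz
    rcases hz.2 with ⟨hrow, hcol⟩ | ⟨hrow, hcol⟩
    · exact ⟨_, key hrow hcol⟩
    · exact ⟨_, (key hrow hcol).trans Sym2.eq_swap⟩

noncomputable def gridHorizEdgeEquiv (k : ℕ) :
    Fin (k + 1) ×ₗ Fin k ≃ (gridHoriz (k + 1)).edgeSet :=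
  Equiv.ofBijective (fun t => ⟨gridHorizEdge k t, gridHorizEdge_mem_edgeSet t⟩)
    ⟨fun _ _ h => gridHorizEdge_injective (congrArg Subtype.val h),
      fun z => (exists_gridHorizEdge_eq z.2).imp fun _ h => Subtype.ext h⟩

theorem ordConnected_setOf_mem_gridHorizEdge (v : Fin (k + 1) × Fin (k + 1)) :
    {t | v ∈ gridHorizEdge k t}.OrdConnected := by
  refine ⟨fun i hi l hl j ⟨hij, hjl⟩ => ?_⟩
  simp only [Set.mem_ofPred_eq, mem_gridHorizEdge, Prod.Lex.le_iff, Fin.ext_iff, Fin.lt_def,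
    Fin.le_def] at *
  omega

theorem gridHoriz_exists_adj (hk : 0 < k) (v : Fin (k + 1) × Fin (k + 1)) :
    ∃ w, (gridHoriz (k + 1)).Adj v w := by
  by_cases hc : (v.2 : ℕ) < k
  · exact ⟨(v.1, ⟨v.2 + 1, by omega⟩), by simp [gridHoriz, Prod.ext_iff, Fin.ext_iff]⟩
  · refine ⟨(v.1, ⟨v.2 - 1, by omega⟩), ?_⟩
    simp only [gridHoriz, Fin.ext_iff, SimpleGraph.fromRel_adj, ne_eq, Prod.ext_iff, true_and]
    omega

end GridHoriz

/-- for `n ≥ 2`, the incidence graph of `ψ(H_n)`, where `H_n` is the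
horizontal-edge spanning subgraph of the `n × n` grid, has pathwidth at most `7`. -/
theorem stmt14 (n : ℕ) (hn : 2 ≤ n) :
    pathwidth (incidenceGraph (psiCNF (gridHoriz n))) ≤ 7 := by
  obtain ⟨k, rfl⟩ : ∃ k, n = k + 1 := ⟨n - 1, by omega⟩
  have : Nonempty (Fin (k + 1) ×ₗ Fin k) := ⟨toLex (0, ⟨0, by omega⟩)⟩
  exact pathwidth_incidenceGraph_psiCNF_le (gridHorizEdgeEquiv k)
    (gridHoriz_exists_adj (by omega)) ordConnected_setOf_mem_gridHorizEdge
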